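/- Asymptotics of the covariant-stability discriminant: let λ > 0 and, for r ∈ (0,1), define S(r) = √( ((1−λ)/2)² + λ·artanh(r)/r ), Γ(r) = −(1+λ)/2 + S(r), and χ(r) = r(1+Γ(r)). Then lim_{r→1⁻} χ(r) = +∞, lim_{r→1⁻} Γ(r) = +∞, and lim_{r→1⁻} ( χ(r) − Γ(r) ) = 1; that is, as the imaginary wavenumber χ → ∞, the discriminant |χ| − Γ of the exact scatteringless dispersion relation asymptotically approaches 1. -/

import Mathlib

/-!
`Γ` and `χ` blow up because `artanh r → ∞` as `r → 1⁻`. Since `χ − Γ = r − (1 − r) Γ`,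
the last limit reduces to `(1 − r) S(r) → 0`. Now `(1 − r) S(r) = √((1 − r)² S(r)²)`, and
`(1 − r) artanh r = ((1 − r) log (1 + r) − (1 − r) log (1 − r)) / 2` tends to `0` because
`x log x` is continuous at `0`; so the radicand tends to `0`.
-/

noncomputable section
open Real Filter

/-- The inverse hyperbolic tangent, `artanh x = (1/2) log((1+x)/(1−x))`. -/
def artanh (x : ℝ) : ℝ := (1 / 2) * Real.log ((1 + x) / (1 - x))

/-- `S(r) = √(((1−λ)/2)² + λ·artanh(r)/r)`. -/
def Sfun (lam r : ℝ) : ℝ := Real.sqrt (((1 - lam) / 2) ^ 2 + lam * _root_.artanh r / r)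

/-- `Γ(r) = −(1+λ)/2 + S(r)`. -/
def Gam (lam r : ℝ) : ℝ := -(1 + lam) / 2 + Sfun lam r

/-- `χ(r) = r(1 + Γ(r))`. -/
def chi (lam r : ℝ) : ℝ := r * (1 + Gam lam r)

open Topology Set

lemma tendsto_one_sub_nhdsLT_one : Tendsto (fun r : ℝ => 1 - r) (𝓝[<] 1) (𝓝[>] 0) := by
  have h := tendsto_nhdsWithin_of_tendsto_nhds (s := Iio 1)
    ((continuous_sub_left (1 : ℝ)).tendsto 1)
  rw [sub_self] at h
  exact tendsto_nhdsWithin_iff.mpr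
    ⟨h, eventually_nhdsWithin_of_forall fun _ hr => sub_pos.mpr (mem_Iio.mp hr)⟩

lemma tendsto_artanh_nhdsLT_one : Tendsto _root_.artanh (𝓝[<] 1) atTop := by
  have hnum : Tendsto (fun r : ℝ => 1 + r) (𝓝[<] 1) (𝓝 2) := by
    simpa [one_add_one_eq_two] using
      tendsto_nhdsWithin_of_tendsto_nhds ((continuous_const_add (1 : ℝ)).tendsto 1)
  have hfrac : Tendsto (fun r : ℝ => (1 + r) / (1 - r)) (𝓝[<] 1) atTop :=
    hnum.pos_mul_atTop two_pos (tendsto_inv_nhdsGT_zero.comp tendsto_one_sub_nhdsLT_one)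
  exact (tendsto_log_atTop.comp hfrac).const_mul_atTop one_half_pos

lemma one_sub_mul_artanh_eq {r : ℝ} (hr : r ∈ Ioo (-1) 1) :
    (1 - r) * _root_.artanh r = ((1 - r) * log (1 + r) - (1 - r) * log (1 - r)) / 2 := by
  have h1 : 1 + r ≠ 0 := by linarith [hr.1]
  have h2 : 1 - r ≠ 0 := by linarith [hr.2]
  rw [_root_.artanh, log_div h1 h2]
  ring

lemma tendsto_one_sub_mul_artanh_nhdsLT_one :
    Tendsto (fun r => (1 - r) * _root_.artanh r) (𝓝[<] 1) (𝓝 0) := by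
  have hcont : ContinuousAt
      (fun r : ℝ => ((1 - r) * log (1 + r) - (1 - r) * log (1 - r)) / 2) 1 := by
    have hlog : ContinuousAt (fun r : ℝ => log (1 + r)) 1 :=
      (continuousAt_log (by norm_num)).comp (continuous_const_add 1).continuousAt
    have hxlogx : Continuous fun r : ℝ => (1 - r) * log (1 - r) :=
      continuous_mul_log.comp (continuous_sub_left 1)
    exact (((continuous_sub_left 1).continuousAt.mul hlog).sub hxlogx.continuousAt).div_const 2
  have hlim := tendsto_nhdsWithin_of_tendsto_nhds (s := Iio 1) hcont.tendsto
  rw [sub_self, zero_mul, zero_mul, sub_self, zero_div] at hlim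
  refine hlim.congr' ?_
  filter_upwards [Ioo_mem_nhdsLT (show (-1 : ℝ) < 1 by norm_num)] with r hr
  exact (one_sub_mul_artanh_eq hr).symm

lemma tendsto_Sfun_nhdsLT_one {lam : ℝ} (hlam : 0 < lam) :
    Tendsto (Sfun lam) (𝓝[<] 1) atTop := by
  have hinv : Tendsto (fun r : ℝ => r⁻¹) (𝓝[<] 1) (𝓝 1) := by
    simpa using (tendsto_inv₀ one_ne_zero).mono_left (nhdsWithin_le_nhds (a := (1 : ℝ)))
  have hquot : Tendsto (fun r => lam * _root_.artanh r / r) (𝓝[<] 1) atTop :=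
    (tendsto_artanh_nhdsLT_one.const_mul_atTop hlam).atTop_mul_pos one_pos hinv
  exact tendsto_sqrt_atTop.comp (tendsto_atTop_add_const_left _ _ hquot)

lemma tendsto_one_sub_mul_Sfun_nhdsLT_one (lam : ℝ) :
    Tendsto (fun r => (1 - r) * Sfun lam r) (𝓝[<] 1) (𝓝 0) := by
  have hsub : Tendsto (fun r : ℝ => 1 - r) (𝓝[<] 1) (𝓝 0) :=
    tendsto_one_sub_nhdsLT_one.mono_right nhdsWithin_le_nhds
  have hid : Tendsto (fun r : ℝ => r) (𝓝[<] 1) (𝓝 1) :=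
    tendsto_nhdsWithin_of_tendsto_nhds tendsto_id
  have hrad : Tendsto (fun r => (1 - r) ^ 2 * ((1 - lam) / 2) ^ 2
      + lam * (1 - r) * ((1 - r) * _root_.artanh r) / r) (𝓝[<] 1) (𝓝 0) := by
    simpa using ((hsub.pow 2).mul_const _).add
      (((hsub.const_mul lam).mul tendsto_one_sub_mul_artanh_nhdsLT_one).div hid one_ne_zero)
  have hsqrt := (continuous_sqrt.tendsto 0).comp hrad
  rw [sqrt_zero] at hsqrt
  refine hsqrt.congr' ?_
  filter_upwards [Ioo_mem_nhdsLT (show (0 : ℝ) < 1 by norm_num)] with r hr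
  have h1r : 0 ≤ 1 - r := by linarith [hr.2]
  have hS : (1 - r) * Sfun lam r
      = √((1 - r) ^ 2 * (((1 - lam) / 2) ^ 2 + lam * _root_.artanh r / r)) := by
    rw [Sfun, sqrt_mul (sq_nonneg _), sqrt_sq h1r]
  rw [Function.comp_apply, hS]
  congr 1
  field_simp [hr.1.ne']

lemma tendsto_one_sub_mul_Gam_nhdsLT_one (lam : ℝ) :
    Tendsto (fun r => (1 - r) * Gam lam r) (𝓝[<] 1) (𝓝 0) := by
  have hsub : Tendsto (fun r : ℝ => 1 - r) (𝓝[<] 1) (𝓝 0) :=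
    tendsto_one_sub_nhdsLT_one.mono_right nhdsWithin_le_nhds
  simpa [Gam, mul_add] using (hsub.mul_const _).add (tendsto_one_sub_mul_Sfun_nhdsLT_one lam)

theorem discriminant_asymptotics (lam : ℝ) (hlam : 0 < lam) :
    Tendsto (fun r => chi lam r) (nhdsWithin 1 (Set.Iio 1)) atTop ∧
    Tendsto (fun r => Gam lam r) (nhdsWithin 1 (Set.Iio 1)) atTop ∧
    Tendsto (fun r => chi lam r - Gam lam r) (nhdsWithin 1 (Set.Iio 1)) (nhds 1) := by
  have hid : Tendsto (fun r : ℝ => r) (𝓝[<] 1) (𝓝 1) :=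
    tendsto_nhdsWithin_of_tendsto_nhds tendsto_id
  have hGam : Tendsto (Gam lam) (𝓝[<] 1) atTop :=
    tendsto_atTop_add_const_left _ _ (tendsto_Sfun_nhdsLT_one hlam)
  refine ⟨hid.pos_mul_atTop one_pos (tendsto_atTop_add_const_left _ 1 hGam), hGam, ?_⟩
  have hdiff : ∀ r, chi lam r - Gam lam r = r - (1 - r) * Gam lam r := fun r => by
    rw [chi]; ring
  simpa [hdiff] using hid.sub (tendsto_one_sub_mul_Gam_nhdsLT_one lam)
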